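/- Let (X,d) be a metric space and let u, u_1, u_2, ... be fuzzy sets in F_USC(X). Then u_n Γ-converges to u if and only if for every α ∈ (0,1] one has closure({x : u(x) > α}) ⊆ liminf_{n→∞} [u_n]_α ⊆ limsup_{n→∞} [u_n]_α ⊆ [u]_α. -/

import Mathlib

open Set Filter Metric Topology MeasureTheory

/-- The α-cut of a fuzzy set `u : X → ℝ`: for `α ≠ 0` it is `{x | u x ≥ α}`,
and for `α = 0` it is the closure of `{x | u x > 0}`. -/
noncomputable def cut {X : Type*} [MetricSpace X] (u : X → ℝ) (α : ℝ) : Set X :=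
  if α = 0 then closure {x | 0 < u x} else {x | α ≤ u x}

/-- `u` is a normal upper semicontinuous fuzzy set: it takes values in `[0,1]` and
all α-cuts (`α ∈ [0,1]`) are nonempty and closed. -/
def FUSC {X : Type*} [MetricSpace X] (u : X → ℝ) : Prop :=
  (∀ x, u x ∈ Set.Icc (0:ℝ) 1) ∧
    ∀ α ∈ Set.Icc (0:ℝ) 1, (cut u α).Nonempty ∧ IsClosed (cut u α)

/-- `F_USCG(X)`: fuzzy sets in `F_USC(X)` with compact positive α-cuts. -/
def FUSCG {X : Type*} [MetricSpace X] (u : X → ℝ) : Prop :=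
  FUSC u ∧ ∀ α ∈ Set.Ioc (0:ℝ) 1, IsCompact (cut u α)

/-- `F_USCB(X)`: fuzzy sets in `F_USC(X)` with compact support. -/
def FUSCB {X : Type*} [MetricSpace X] (u : X → ℝ) : Prop :=
  FUSC u ∧ IsCompact (cut u 0)

/-- Kuratowski lower limit of a sequence of sets. -/
def kurLiminf {Y : Type*} [MetricSpace Y] (C : ℕ → Set Y) : Set Y :=
  {y | ∃ f : ℕ → Y, (∀ n, f n ∈ C n) ∧ Tendsto f atTop (𝓝 y)}

/-- Kuratowski upper limit of a sequence of sets. -/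
def kurLimsup {Y : Type*} [MetricSpace Y] (C : ℕ → Set Y) : Set Y :=
  {y | ∃ φ : ℕ → ℕ, StrictMono φ ∧
        ∃ f : ℕ → Y, (∀ n, f n ∈ C (φ n)) ∧ Tendsto f atTop (𝓝 y)}

/-- Kuratowski convergence of a sequence of sets to a set. -/
def KurConv {Y : Type*} [MetricSpace Y] (C : ℕ → Set Y) (D : Set Y) : Prop :=
  kurLiminf C = D ∧ kurLimsup C = D

/-- The endograph of `u`: `{(x,t) ∈ X × [0,1] : u x ≥ t}`. -/
def endo {X : Type*} [MetricSpace X] (u : X → ℝ) : Set (X × ℝ) :=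
  {p | p.2 ∈ Set.Icc (0:ℝ) 1 ∧ p.2 ≤ u p.1}

/-- The sendograph of `u`: `end u ∩ ([u]₀ × [0,1])`. -/
noncomputable def sendo {X : Type*} [MetricSpace X] (u : X → ℝ) : Set (X × ℝ) :=
  endo u ∩ (cut u 0) ×ˢ (Set.Icc (0:ℝ) 1)

/-- Γ-convergence: Kuratowski convergence of endographs. -/
def GammaConv {X : Type*} [MetricSpace X] (un : ℕ → X → ℝ) (u : X → ℝ) : Prop :=
  KurConv (fun n => endo (un n)) (endo u)

/-- The endograph metric. -/
noncomputable def Hend {X : Type*} [MetricSpace X] (u v : X → ℝ) : ℝ :=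
  hausdorffDist (endo u) (endo v)

/-- The sendograph metric. -/
noncomputable def Hsend {X : Type*} [MetricSpace X] (u v : X → ℝ) : ℝ :=
  hausdorffDist (sendo u) (sendo v)

/-- The set of platform points of `u`:
`α ∈ (0,1)` with `closure {u > α}` a proper subset of `[u]_α`. -/
def Pset {X : Type*} [MetricSpace X] (u : X → ℝ) : Set ℝ :=
  {α | α ∈ Set.Ioo (0:ℝ) 1 ∧ closure {x | α < u x} ⊂ cut u α}

/-- `P₀(u)`: the set of `α ∈ (0,1)` such that `H([u]_β, [u]_α)` does not tend to `0`
as `β → α`. -/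
def P0set {X : Type*} [MetricSpace X] (u : X → ℝ) : Set ℝ :=
  {α | α ∈ Set.Ioo (0:ℝ) 1 ∧
    ¬ Tendsto (fun β => hausdorffDist (cut u β) (cut u α)) (𝓝[≠] α) (𝓝 0)}


/-! The slice of `endo v` at a level `α ∈ (0,1]` is `cut v α × {α}`, and Kuratowski lower and
upper limits are compatible with taking such slices. Lower limits are closed, so `endo u` lies
in the lower limit of the endographs as soon as every `(x, α)` with `α < u x` does: `(x, t)` is
the limit of these points as `α ↑ t`. Dually, a point `(x, t)` of the upper limit with `u x < t`
would put `x` into the upper limit of the cuts at a level strictly between `u x` and `t`. -/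

section Kuratowski

variable {Y Z : Type*} [MetricSpace Y] [MetricSpace Z]

theorem kurLiminf_subset_kurLimsup (C : ℕ → Set Y) : kurLiminf C ⊆ kurLimsup C :=
  fun _ ⟨f, hf, hlim⟩ => ⟨id, strictMono_id, f, hf, hlim⟩

theorem kurConv_iff {C : ℕ → Set Y} {D : Set Y} :
    KurConv C D ↔ D ⊆ kurLiminf C ∧ kurLimsup C ⊆ D := by
  refine ⟨fun h => ⟨h.1.superset, h.2.subset⟩, fun ⟨hinf, hsup⟩ => ?_⟩
  have hsub := kurLiminf_subset_kurLimsup C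
  exact ⟨(hsub.trans hsup).antisymm hinf, hsup.antisymm (hinf.trans hsub)⟩

theorem mem_kurLiminf_iff_tendsto_infDist {C : ℕ → Set Y} (hC : ∀ n, (C n).Nonempty) {y : Y} :
    y ∈ kurLiminf C ↔ Tendsto (fun n => infDist y (C n)) atTop (𝓝 0) := by
  constructor
  · rintro ⟨f, hf, hlim⟩
    refine squeeze_zero (fun _ => infDist_nonneg) (fun n => infDist_le_dist_of_mem (hf n)) ?_
    simpa only [dist_comm y] using tendsto_iff_dist_tendsto_zero.mp hlim
  · intro h
    have hnear : ∀ n : ℕ, ∃ z ∈ C n, dist y z < infDist y (C n) + 1 / (n + 1) := fun n =>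
      (infDist_lt_iff (hC n)).mp (lt_add_of_pos_right _ Nat.one_div_pos_of_nat)
    choose f hf hdist using hnear
    have hbound : Tendsto (fun n : ℕ => infDist y (C n) + 1 / (n + 1)) atTop (𝓝 0) := by
      simpa using h.add tendsto_one_div_add_atTop_nhds_zero_nat
    refine ⟨f, hf, tendsto_iff_dist_tendsto_zero.mpr ?_⟩
    exact squeeze_zero (fun _ => dist_nonneg)
      (fun n => (dist_comm (f n) y).trans_le (hdist n).le) hbound

theorem isClosed_kurLiminf (C : ℕ → Set Y) : IsClosed (kurLiminf C) := by
  by_cases hC : ∀ n, (C n).Nonempty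
  · have hset : kurLiminf C = {y | Tendsto (fun n => infDist y (C n)) atTop (𝓝 0)} :=
      Set.ext fun _ => mem_kurLiminf_iff_tendsto_infDist hC
    rw [hset]
    exact (LipschitzWith.uniformEquicontinuous _ 1 fun n => lipschitz_infDist_pt (C n))
      |>.equicontinuous.isClosed_setOfPred_tendsto continuous_const
  · obtain ⟨n, hn⟩ := not_forall.mp hC
    convert isClosed_empty
    exact Set.eq_empty_of_forall_notMem fun _ ⟨f, hf, _⟩ => hn ⟨f n, hf n⟩

theorem mem_kurLiminf_of_eventually {C : ℕ → Set Y} (hC : ∀ n, (C n).Nonempty) {f : ℕ → Y}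
    {y : Y} (hf : ∀ᶠ n in atTop, f n ∈ C n) (hlim : Tendsto f atTop (𝓝 y)) :
    y ∈ kurLiminf C := by
  classical
  refine ⟨fun n => if f n ∈ C n then f n else (hC n).some, fun n => ?_, ?_⟩
  · by_cases h : f n ∈ C n <;> simp [h, (hC n).some_mem]
  · refine hlim.congr' ?_
    filter_upwards [hf] with n hn
    simp [hn]

theorem mem_kurLimsup_of_eventually {C : ℕ → Set Y} {φ : ℕ → ℕ} (hφ : StrictMono φ)
    {f : ℕ → Y} {y : Y} (hf : ∀ᶠ n in atTop, f n ∈ C (φ n))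
    (hlim : Tendsto f atTop (𝓝 y)) : y ∈ kurLimsup C := by
  obtain ⟨N, hN⟩ := eventually_atTop.mp hf
  exact ⟨fun n => φ (n + N), hφ.comp (strictMono_id.add_const N), fun n => f (n + N),
    fun n => hN _ (Nat.le_add_left N n), hlim.comp (tendsto_add_atTop_nat N)⟩

theorem mapsTo_kurLiminf {C : ℕ → Set Y} {D : ℕ → Set Z} {g : Y → Z}
    (hg : Continuous g) (hCD : ∀ n, MapsTo g (C n) (D n)) :
    MapsTo g (kurLiminf C) (kurLiminf D) :=
  fun _ ⟨f, hf, hlim⟩ => ⟨g ∘ f, fun n => hCD n (hf n), (hg.tendsto _).comp hlim⟩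

theorem mapsTo_kurLimsup {C : ℕ → Set Y} {D : ℕ → Set Z} {g : Y → Z}
    (hg : Continuous g) (hCD : ∀ n, MapsTo g (C n) (D n)) :
    MapsTo g (kurLimsup C) (kurLimsup D) :=
  fun _ ⟨φ, hφ, f, hf, hlim⟩ =>
    ⟨φ, hφ, g ∘ f, fun n => hCD _ (hf n), (hg.tendsto _).comp hlim⟩

end Kuratowski

section Endograph

variable {X : Type*} [MetricSpace X] {u : X → ℝ} {un : ℕ → X → ℝ} {α : ℝ}

theorem mem_cut_of_ne_zero (hα : α ≠ 0) {x : X} : x ∈ cut u α ↔ α ≤ u x := by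
  rw [cut, if_neg hα]; rfl

theorem mapsTo_cut_endo (hα : α ∈ Ioc 0 1) : MapsTo (·, α) (cut u α) (endo u) :=
  fun _ hx => ⟨Ioc_subset_Icc_self hα, (mem_cut_of_ne_zero hα.1.ne').mp hx⟩

theorem closure_subset_kurLiminf_cut (hu : ∀ x, u x ≤ 1) (hun : ∀ n, (cut (un n) α).Nonempty)
    (hα : 0 < α) (h : endo u ⊆ kurLiminf fun n => endo (un n)) :
    closure {x | α < u x} ⊆ kurLiminf fun n => cut (un n) α := by
  refine (isClosed_kurLiminf _).closure_subset_iff.mpr fun x (hx : α < u x) => ?_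
  have hxu : (x, u x) ∈ endo u := ⟨⟨hα.le.trans hx.le, hu x⟩, le_rfl⟩
  obtain ⟨f, hf, hlim⟩ := h hxu
  have hhigh : ∀ᶠ n in atTop, α < (f n).2 :=
    (continuous_snd.tendsto _ |>.comp hlim).eventually (eventually_gt_nhds hx)
  refine mem_kurLiminf_of_eventually hun ?_ ((continuous_fst.tendsto _).comp hlim)
  filter_upwards [hhigh] with n hn
  exact (mem_cut_of_ne_zero hα.ne').mpr (hn.le.trans (hf n).2)

theorem kurLimsup_cut_subset (hα : α ∈ Ioc 0 1)
    (h : (kurLimsup fun n => endo (un n)) ⊆ endo u) :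
    (kurLimsup fun n => cut (un n) α) ⊆ cut u α := fun x hx =>
  (mem_cut_of_ne_zero hα.1.ne').mpr
    (h (mapsTo_kurLimsup (by fun_prop) (fun _ => mapsTo_cut_endo hα) hx)).2

theorem endo_subset_kurLiminf (hun : ∀ n x, 0 ≤ un n x)
    (h : ∀ α ∈ Ioc (0 : ℝ) 1, {x | α < u x} ⊆ kurLiminf fun n => cut (un n) α) :
    endo u ⊆ kurLiminf fun n => endo (un n) := by
  rintro ⟨x, t⟩ ⟨ht, htu⟩
  rcases ht.1.eq_or_lt with rfl | ht0
  · exact ⟨fun _ => (x, 0), fun n => ⟨left_mem_Icc.mpr zero_le_one, hun n x⟩,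
      tendsto_const_nhds⟩
  have hbelow : ∀ α ∈ Ioo 0 t, (x, α) ∈ kurLiminf fun n => endo (un n) := fun α hα =>
    have hα' : α ∈ Ioc 0 1 := ⟨hα.1, hα.2.le.trans ht.2⟩
    mapsTo_kurLiminf (by fun_prop) (fun _ => mapsTo_cut_endo hα')
      (h α hα' (hα.2.trans_le htu))
  exact (isClosed_kurLiminf _).mem_of_tendsto
    (tendsto_const_nhds.prodMk_nhds (tendsto_id.mono_left nhdsWithin_le_nhds))
    (eventually_of_mem (Ioo_mem_nhdsLT ht0) hbelow)

theorem kurLimsup_endo_subset (hu : ∀ x, 0 ≤ u x)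
    (h : ∀ α ∈ Ioc (0 : ℝ) 1, (kurLimsup fun n => cut (un n) α) ⊆ cut u α) :
    (kurLimsup fun n => endo (un n)) ⊆ endo u := by
  rintro ⟨x, t⟩ ⟨φ, hφ, f, hf, hlim⟩
  have ht : t ∈ Icc (0 : ℝ) 1 := isClosed_Icc.mem_of_tendsto
    ((continuous_snd.tendsto _).comp hlim) (Eventually.of_forall fun n => (hf n).1)
  refine ⟨ht, not_lt.mp fun hut => ?_⟩
  obtain ⟨α, huα, hαt⟩ := exists_between hut
  have hα : α ∈ Ioc 0 1 := ⟨(hu x).trans_lt huα, hαt.le.trans ht.2⟩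
  have hhigh : ∀ᶠ n in atTop, α < (f n).2 :=
    (continuous_snd.tendsto _ |>.comp hlim).eventually (eventually_gt_nhds hαt)
  have hx : x ∈ kurLimsup fun n => cut (un n) α := by
    refine mem_kurLimsup_of_eventually hφ ?_ ((continuous_fst.tendsto _).comp hlim)
    filter_upwards [hhigh] with n hn
    exact (mem_cut_of_ne_zero hα.1.ne').mpr (hn.le.trans (hf n).2)
  exact huα.not_ge ((mem_cut_of_ne_zero hα.1.ne').mp (h α hα hx))

end Endograph

theorem gamma_convergence_iff_cut_sandwich_closure
    {X : Type*} [MetricSpace X] (u : X → ℝ) (un : ℕ → X → ℝ)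
    (hu : FUSC u) (hun : ∀ n, FUSC (un n)) :
    GammaConv un u ↔
      ∀ α ∈ Set.Ioc (0:ℝ) 1,
        closure {x | α < u x} ⊆ kurLiminf (fun n => cut (un n) α) ∧
        kurLiminf (fun n => cut (un n) α) ⊆ kurLimsup (fun n => cut (un n) α) ∧
        kurLimsup (fun n => cut (un n) α) ⊆ cut u α := by
  rw [GammaConv, kurConv_iff]
  constructor
  · rintro ⟨hinf, hsup⟩ α hα
    have hne : ∀ n, (cut (un n) α).Nonempty := fun n =>
      ((hun n).2 α (Ioc_subset_Icc_self hα)).1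
    exact ⟨closure_subset_kurLiminf_cut (fun x => (hu.1 x).2) hne hα.1 hinf,
      kurLiminf_subset_kurLimsup _, kurLimsup_cut_subset hα hsup⟩
  · intro h
    exact ⟨endo_subset_kurLiminf (fun n x => ((hun n).1 x).1) fun α hα =>
        subset_closure.trans (h α hα).1,
      kurLimsup_endo_subset (fun x => (hu.1 x).1) fun α hα => (h α hα).2.2⟩
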